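/- arXiv:math/0610851 — 2 statements merged into one kernel-verified Lean document; each statement's English description precedes it below -/
import Mathlib

section
/- For every complex Lie algebra 𝔤, every fixed s ∈ ℂ, and all e₁, e₁' ∈ ℂ with e₁, e₁' ≠ 0, the Lie algebras Ḡ^(e₁, s·e₁) and Ḡ^(e₁', s·e₁') are isomorphic; that is, the family of current algebras over the line D_s = {e₂ = s·e₁} is a jump deformation. -/
open scoped Classical

/-- The bracket of the genus-one current algebra family
`Ḡ^(e₁,e₂) = 𝔤 ⊗ A^(e₁,e₂)`, where the tensor product of `𝔤` with the
ℂ-vector space with basis `{Aₙ}_{n∈ℤ}` is modeled as `ℤ →₀ 𝔤`, the pure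
tensor `x ⊗ Aₙ` corresponding to `Finsupp.single n x`.  The bracket is the
bilinear extension of:
`[x ⊗ Aₙ, y ⊗ Aₘ] = [x,y] ⊗ Aₙ₊ₘ` if `n` or `m` is even, and
`[x ⊗ Aₙ, y ⊗ Aₘ] = [x,y] ⊗ (Aₙ₊ₘ + 3e₁Aₙ₊ₘ₋₂ + (e₁−e₂)(2e₁+e₂)Aₙ₊ₘ₋₄)`
if both `n` and `m` are odd. -/
noncomputable def Gbr (𝔤 : Type*) [LieRing 𝔤] [LieAlgebra ℂ 𝔤]
    (e₁ e₂ : ℂ) (f g : ℤ →₀ 𝔤) : ℤ →₀ 𝔤 :=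
  f.sum fun n x => g.sum fun m y =>
    if Odd n ∧ Odd m then
      Finsupp.single (n + m) ⁅x, y⁆ + (3 * e₁) • Finsupp.single (n + m - 2) ⁅x, y⁆
        + ((e₁ - e₂) * (2 * e₁ + e₂)) • Finsupp.single (n + m - 4) ⁅x, y⁆
    else Finsupp.single (n + m) ⁅x, y⁆

/-!
Rescaling the basis by `Aₙ ↦ cⁿ Aₙ` (`c ≠ 0`) multiplies the structure constants `3e₁` and
`(e₁ - e₂)(2e₁ + e₂)` of the odd–odd products by `c⁻²` and `c⁻⁴`. On the line `e₂ = s e₁` the second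
constant is `(1 - s)(2 + s) e₁²`, so a square root `c` of `e₁ / e₁'` makes the rescaling an
isomorphism `Ḡ^(e₁, s e₁) ≅ Ḡ^(e₁', s e₁')`.
-/

section Rescale

variable {R M : Type*} [CommRing R] [AddCommGroup M] [Module R M]

noncomputable def rescaleₗ (c : Rˣ) : (ℤ →₀ M) →ₗ[R] (ℤ →₀ M) :=
  Finsupp.lsum R fun n => ((c ^ n : Rˣ) : R) • Finsupp.lsingle n

@[simp]
lemma rescaleₗ_single (c : Rˣ) (n : ℤ) (x : M) :
    rescaleₗ c (Finsupp.single n x) = Finsupp.single n (((c ^ n : Rˣ) : R) • x) := by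
  simp [rescaleₗ]

lemma rescaleₗ_comp (a b : Rˣ) :
    (rescaleₗ a : (ℤ →₀ M) →ₗ[R] (ℤ →₀ M)) ∘ₗ rescaleₗ b = rescaleₗ (a * b) :=
  Finsupp.lhom_ext fun n x => by simp [smul_smul, mul_zpow]

lemma rescaleₗ_one : (rescaleₗ 1 : (ℤ →₀ M) →ₗ[R] (ℤ →₀ M)) = LinearMap.id :=
  Finsupp.lhom_ext fun n x => by simp

noncomputable def rescale (c : Rˣ) : (ℤ →₀ M) ≃ₗ[R] (ℤ →₀ M) :=
  LinearEquiv.ofLinearMap (rescaleₗ c) (rescaleₗ c⁻¹)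
    (by rw [rescaleₗ_comp, mul_inv_cancel, rescaleₗ_one])
    (by rw [rescaleₗ_comp, inv_mul_cancel, rescaleₗ_one])

end Rescale

section Bracket

variable {R M : Type*} [CommRing R] [AddCommGroup M] [Module R M]

variable (M) in
/-- `z ↦ z ⊗ AₙAₘ`, for the product `AₙAₘ` of the commutative algebra `A^(e₁,e₂)`. -/
noncomputable def basisMul (e₁ e₂ : R) (n m : ℤ) : M →ₗ[R] (ℤ →₀ M) :=
  if Odd n ∧ Odd m then
    Finsupp.lsingle (n + m) + (3 * e₁) • Finsupp.lsingle (n + m - 2)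
      + ((e₁ - e₂) * (2 * e₁ + e₂)) • Finsupp.lsingle (n + m - 4)
  else Finsupp.lsingle (n + m)

lemma rescaleₗ_basisMul {c : Rˣ} {e₁ e₂ e₁' e₂' : R}
    (h2 : e₁ = c ^ 2 * e₁')
    (h4 : (e₁ - e₂) * (2 * e₁ + e₂) = c ^ 4 * ((e₁' - e₂') * (2 * e₁' + e₂')))
    (n m : ℤ) (z : M) :
    rescaleₗ c (basisMul M e₁ e₂ n m z) =
      basisMul M e₁' e₂' n m (((c ^ n * c ^ m : Rˣ) : R) • z) := by
  have hnm : c ^ (n + m) = c ^ n * c ^ m := zpow_add c n m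
  have h2' : ((c ^ (n + m - 2) : Rˣ) : R) * (c : R) ^ 2 = ((c ^ (n + m) : Rˣ) : R) := by
    rw [← Units.val_pow_eq_pow_val, ← Units.val_mul, ← zpow_natCast, ← zpow_add]; ring_nf
  have h4' : ((c ^ (n + m - 4) : Rˣ) : R) * (c : R) ^ 4 = ((c ^ (n + m) : Rˣ) : R) := by
    rw [← Units.val_pow_eq_pow_val, ← Units.val_mul, ← zpow_natCast, ← zpow_add]; ring_nf
  have hs2 : ((c ^ (n + m - 2) : Rˣ) : R) * (3 * e₁) = ((c ^ (n + m) : Rˣ) : R) * (3 * e₁') := by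
    rw [h2, ← h2']; ring
  have hs4 : ((c ^ (n + m - 4) : Rˣ) : R) * ((e₁ - e₂) * (2 * e₁ + e₂)) =
      ((c ^ (n + m) : Rˣ) : R) * ((e₁' - e₂') * (2 * e₁' + e₂')) := by
    rw [h4, ← h4']; ring
  unfold basisMul
  split_ifs
  · simp only [LinearMap.add_apply, LinearMap.smul_apply, Finsupp.lsingle_apply, map_add, map_smul,
      smul_add, rescaleₗ_single, Finsupp.smul_single, smul_smul, ← hnm, hs2, hs4]
  · simp [hnm]

variable (R) (L : Type*) [LieRing L] [LieAlgebra R L]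

noncomputable def deformedBracket (e₁ e₂ : R) : (ℤ →₀ L) →ₗ[R] (ℤ →₀ L) →ₗ[R] (ℤ →₀ L) :=
  Finsupp.lsum R fun n => (Finsupp.lsum R).toLinearMap ∘ₗ
    LinearMap.pi fun m =>
      (LieAlgebra.ad R L : L →ₗ[R] Module.End R L).compr₂ (basisMul L e₁ e₂ n m)

variable {R L}

@[simp]
lemma deformedBracket_single_single (e₁ e₂ : R) (n m : ℤ) (x y : L) :
    deformedBracket R L e₁ e₂ (Finsupp.single n x) (Finsupp.single m y) =
      basisMul L e₁ e₂ n m ⁅x, y⁆ := by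
  simp [deformedBracket]

lemma Gbr_eq_deformedBracket (𝔤 : Type*) [LieRing 𝔤] [LieAlgebra ℂ 𝔤] (e₁ e₂ : ℂ)
    (f g : ℤ →₀ 𝔤) :
    Gbr 𝔤 e₁ e₂ f g = deformedBracket ℂ 𝔤 e₁ e₂ f g := by
  simp only [Gbr, deformedBracket, Finsupp.lsum_apply, LinearMap.coe_comp, Function.comp_apply,
    Finsupp.sum, LinearMap.sum_apply, LinearEquiv.coe_coe, LinearMap.pi_apply,
    LinearMap.compr₂_apply]
  refine Finset.sum_congr rfl fun n _ => Finset.sum_congr rfl fun m _ => ?_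
  unfold basisMul
  split_ifs <;> simp

lemma rescaleₗ_deformedBracket {c : Rˣ} {e₁ e₂ e₁' e₂' : R}
    (h2 : e₁ = c ^ 2 * e₁')
    (h4 : (e₁ - e₂) * (2 * e₁ + e₂) = c ^ 4 * ((e₁' - e₂') * (2 * e₁' + e₂'))) :
    (deformedBracket R L e₁ e₂).compr₂ (rescaleₗ c) =
      (deformedBracket R L e₁' e₂').compl₁₂ (rescaleₗ c) (rescaleₗ c) :=
  Finsupp.lhom_ext fun n x => Finsupp.lhom_ext fun m y => by
    simp [rescaleₗ_basisMul h2 h4, smul_smul, mul_comm]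

end Bracket

/-- For every complex Lie algebra `𝔤`, every fixed `s ∈ ℂ`,
and all `e₁, e₁' ∈ ℂ` with `e₁, e₁' ≠ 0`, the Lie algebras `Ḡ^(e₁, s·e₁)`
and `Ḡ^(e₁', s·e₁')` are isomorphic; that is, the family of current algebras
over the line `D_s = {e₂ = s·e₁}` is a jump deformation. -/
theorem G_jump_deformation_on_Ds (𝔤 : Type) [LieRing 𝔤] [LieAlgebra ℂ 𝔤]
    (s : ℂ) (e₁ e₁' : ℂ) (he : e₁ ≠ 0) (he' : e₁' ≠ 0) :
    ∃ φ : (ℤ →₀ 𝔤) ≃ₗ[ℂ] (ℤ →₀ 𝔤),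
      ∀ f g : ℤ →₀ 𝔤,
        φ (Gbr 𝔤 e₁ (s * e₁) f g) = Gbr 𝔤 e₁' (s * e₁') (φ f) (φ g) := by
  obtain ⟨c, hc⟩ := IsAlgClosed.exists_pow_nat_eq (e₁ / e₁') two_pos
  have hc0 : c ≠ 0 := ne_zero_pow two_ne_zero (hc ▸ div_ne_zero he he')
  have h2 : e₁ = (Units.mk0 c hc0 : ℂ) ^ 2 * e₁' := by
    rw [Units.val_mk0, hc, div_mul_cancel₀ _ he']
  have h4 : (e₁ - s * e₁) * (2 * e₁ + s * e₁) =
      (Units.mk0 c hc0 : ℂ) ^ 4 * ((e₁' - s * e₁') * (2 * e₁' + s * e₁')) := by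
    rw [h2]; ring
  refine ⟨rescale (Units.mk0 c hc0), fun f g => ?_⟩
  simp only [Gbr_eq_deformedBracket, rescale, LinearEquiv.coe_ofLinearMap]
  exact LinearMap.congr_fun₂ (rescaleₗ_deformedBracket h2 h4) f g
end

section
/- Let 𝔤 be a finite-dimensional simple complex Lie algebra with Killing form β and let (e₁,e₂) ∈ ℂ². Define c: ℤ × ℤ → ℂ by c(n,m) = −n·δ_{m,−n} if n and m are both even; c(n,m) = 0 if n and m have different parity; and c(n,m) = −n·δ_{m,−n} + 3e₁(−n+1)·δ_{m,−n+2} + (e₁−e₂)(2e₁+e₂)(−n+2)·δ_{m,−n+4} if n and m are both odd. Then the bilinear form γ on Ḡ^(e₁,e₂) determined by γ(x ⊗ Aₙ, y ⊗ Aₘ) = β(x,y)·c(n,m) is an alternating Lie algebra 2-cocycle with values in the trivial module ℂ, i.e. γ([a,b],c') + γ([b,c'],a) + γ([c',a],b) = 0 for all a,b,c' ∈ Ḡ^(e₁,e₂). -/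
open scoped Classical

/-- The coefficient `c(n,m)` of the central-extension cocycle:
`c(n,m) = −n·δ_{m,−n}` if `n, m` are both even; `c(n,m) = 0` if `n, m` have
different parity; and
`c(n,m) = −n·δ_{m,−n} + 3e₁(−n+1)·δ_{m,−n+2} + (e₁−e₂)(2e₁+e₂)(−n+2)·δ_{m,−n+4}`
if `n, m` are both odd. -/
noncomputable def ccoef (e₁ e₂ : ℂ) (n m : ℤ) : ℂ :=
  if Even n ∧ Even m then
    ((-n : ℤ) : ℂ) * (if m = -n then 1 else 0)
  else if Odd n ∧ Odd m then
    ((-n : ℤ) : ℂ) * (if m = -n then 1 else 0)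
      + 3 * e₁ * ((-n + 1 : ℤ) : ℂ) * (if m = -n + 2 then 1 else 0)
      + (e₁ - e₂) * (2 * e₁ + e₂) * ((-n + 2 : ℤ) : ℂ) * (if m = -n + 4 then 1 else 0)
  else 0

/-- The bilinear form `γ` on `Ḡ^(e₁,e₂)` determined by
`γ(x ⊗ Aₙ, y ⊗ Aₘ) = β(x,y)·c(n,m)`, with `β` the Killing form of `𝔤`. -/
noncomputable def gammaCocycle (𝔤 : Type*) [LieRing 𝔤] [LieAlgebra ℂ 𝔤]
    (e₁ e₂ : ℂ) (f g : ℤ →₀ 𝔤) : ℂ :=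
  f.sum fun n x => g.sum fun m y => killingForm ℂ 𝔤 x y * ccoef e₁ e₂ n m


/-!
Both `γ` and the bracket are bilinear, so it suffices to check the cocycle identity on pure
tensors `x ⊗ Aₙ, y ⊗ Aₘ, z ⊗ Aₖ`. There invariance and symmetry of the Killing form make all
three terms multiples of `β([x,y], z)`, and it remains to see that the cyclic sum of the scalar
coefficients vanishes. Since `c(p, q)` is supported on `p + q ∈ {0, 2, 4}`, only the weights
`s = n + m + k ∈ {0, 2, 4}` contribute; at `s = 0` the coefficients add up to `-2s`, and at
`s = 2, 4` they cancel when exactly two of `n, m, k` are odd, while every other parity pattern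
makes each term vanish. Alternation follows from `c(m, n) = -c(n, m)` and the symmetry of `β`.
-/

open Finsupp

section Coefficients

variable (e₁ e₂ : ℂ)

lemma ccoef_eq (p q : ℤ) :
    ccoef e₁ e₂ p q = -p * (if p + q = 0 then 1 else 0)
      + if Odd p then 3 * e₁ * (1 - p) * (if p + q = 2 then 1 else 0)
          + (e₁ - e₂) * (2 * e₁ + e₂) * (2 - p) * (if p + q = 4 then 1 else 0)
        else 0 := by
  unfold ccoef
  by_cases hp : Even p <;> by_cases hq : Even q <;>
    simp only [hp, hq, ← Int.not_even_iff_odd, not_true, not_false_iff, and_true, and_false,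
      if_true, if_false] <;>
    split_ifs <;> first | (exfalso; grind) | (push_cast; ring)

lemma ccoef_swap (p q : ℤ) : ccoef e₁ e₂ q p = -ccoef e₁ e₂ p q := by
  obtain hpq | rfl | rfl | rfl :
      (p + q ≠ 0 ∧ p + q ≠ 2 ∧ p + q ≠ 4) ∨ q = -p ∨ q = 2 - p ∨ q = 4 - p := by omega
  all_goals
    rcases Int.emod_two_eq_zero_or_one p with hp | hp <;>
    simp (disch := omega) only [ccoef_eq, Int.odd_iff, if_pos, if_neg, mul_zero, mul_one,
      add_zero, ite_self, neg_zero] <;>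
    push_cast <;> ring

noncomputable def bracketCoeff (n m k : ℤ) : ℂ :=
  if Odd n ∧ Odd m then
    ccoef e₁ e₂ (n + m) k + 3 * e₁ * ccoef e₁ e₂ (n + m - 2) k
      + (e₁ - e₂) * (2 * e₁ + e₂) * ccoef e₁ e₂ (n + m - 4) k
  else ccoef e₁ e₂ (n + m) k

lemma bracketCoeff_cyclic (n m k : ℤ) :
    bracketCoeff e₁ e₂ n m k + bracketCoeff e₁ e₂ m k n + bracketCoeff e₁ e₂ k n m = 0 := by
  obtain hs | rfl | rfl | rfl : (n + m + k ≠ 0 ∧ n + m + k ≠ 2 ∧ n + m + k ≠ 4)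
      ∨ k = -n - m ∨ k = 2 - n - m ∨ k = 4 - n - m := by omega
  all_goals
    rcases Int.emod_two_eq_zero_or_one n with hn | hn <;>
    rcases Int.emod_two_eq_zero_or_one m with hm | hm <;>
    simp (disch := omega) only [bracketCoeff, ccoef_eq, Int.odd_iff, if_pos, if_neg,
      mul_zero, mul_one, add_zero, ite_self] <;>
    push_cast <;> ring

end Coefficients

section Cocycle
variable {𝔤 : Type*} [LieRing 𝔤] [LieAlgebra ℂ 𝔤] (e₁ e₂ : ℂ)

lemma gammaCocycle_single_single (n m : ℤ) (x y : 𝔤) :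
    gammaCocycle 𝔤 e₁ e₂ (single n x) (single m y) = killingForm ℂ 𝔤 x y * ccoef e₁ e₂ n m := by
  simp [gammaCocycle]

lemma gammaCocycle_swap (f g : ℤ →₀ 𝔤) :
    gammaCocycle 𝔤 e₁ e₂ g f = -gammaCocycle 𝔤 e₁ e₂ f g := by
  rw [gammaCocycle, gammaCocycle, Finsupp.sum_comm]
  simp only [Finsupp.sum, ← Finset.sum_neg_distrib]
  refine Finset.sum_congr rfl fun n _ => Finset.sum_congr rfl fun m _ => ?_
  rw [ccoef_swap, LieModule.traceForm_comm ℂ 𝔤 𝔤 (g m), mul_neg]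

lemma gammaCocycle_self (f : ℤ →₀ 𝔤) : gammaCocycle 𝔤 e₁ e₂ f f = 0 :=
  CharZero.eq_neg_self_iff.mp (gammaCocycle_swap e₁ e₂ f f)

lemma gammaCocycle_add_left (f f' g : ℤ →₀ 𝔤) :
    gammaCocycle 𝔤 e₁ e₂ (f + f') g
      = gammaCocycle 𝔤 e₁ e₂ f g + gammaCocycle 𝔤 e₁ e₂ f' g := by
  refine Finsupp.sum_add_index' (fun _ => ?_) fun _ _ _ => ?_ <;>
    simp [Finsupp.sum, add_mul, Finset.sum_add_distrib]

lemma gammaCocycle_add_right (f g g' : ℤ →₀ 𝔤) :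
    gammaCocycle 𝔤 e₁ e₂ f (g + g')
      = gammaCocycle 𝔤 e₁ e₂ f g + gammaCocycle 𝔤 e₁ e₂ f g' := by
  rw [gammaCocycle_swap, gammaCocycle_add_left, neg_add, ← gammaCocycle_swap,
    ← gammaCocycle_swap]

lemma Gbr_single_single (n m : ℤ) (x y : 𝔤) :
    Gbr 𝔤 e₁ e₂ (single n x) (single m y)
      = if Odd n ∧ Odd m then
          single (n + m) ⁅x, y⁆ + (3 * e₁) • single (n + m - 2) ⁅x, y⁆
            + ((e₁ - e₂) * (2 * e₁ + e₂)) • single (n + m - 4) ⁅x, y⁆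
        else single (n + m) ⁅x, y⁆ := by
  rw [Gbr, Finsupp.sum_single_index, Finsupp.sum_single_index] <;> simp

lemma Gbr_swap (f g : ℤ →₀ 𝔤) : Gbr 𝔤 e₁ e₂ g f = -Gbr 𝔤 e₁ e₂ f g := by
  rw [Gbr, Gbr, Finsupp.sum_comm]
  simp only [Finsupp.sum, ← Finset.sum_neg_distrib]
  refine Finset.sum_congr rfl fun n _ => Finset.sum_congr rfl fun m _ => ?_
  have hodd : (Odd m ∧ Odd n) ↔ (Odd n ∧ Odd m) := and_comm
  simp only [hodd, add_comm m n, ← lie_skew (f n) (g m)]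
  split_ifs <;> simp only [single_neg, smul_neg, neg_add, neg_neg]

lemma Gbr_add_left (f f' g : ℤ →₀ 𝔤) :
    Gbr 𝔤 e₁ e₂ (f + f') g = Gbr 𝔤 e₁ e₂ f g + Gbr 𝔤 e₁ e₂ f' g := by
  refine Finsupp.sum_add_index' (fun _ => ?_) fun n x x' => ?_
  · simp
  · rw [← Finsupp.sum_add]
    refine Finsupp.sum_congr fun m _ => ?_
    split_ifs <;> simp only [add_lie, single_add, smul_add]
    abel

lemma Gbr_add_right (f g g' : ℤ →₀ 𝔤) :
    Gbr 𝔤 e₁ e₂ f (g + g') = Gbr 𝔤 e₁ e₂ f g + Gbr 𝔤 e₁ e₂ f g' := by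
  rw [Gbr_swap, Gbr_add_left, neg_add, ← Gbr_swap, ← Gbr_swap]

lemma gammaCocycle_Gbr_single_single (n m k : ℤ) (x y z : 𝔤) :
    gammaCocycle 𝔤 e₁ e₂ (Gbr 𝔤 e₁ e₂ (single n x) (single m y)) (single k z)
      = killingForm ℂ 𝔤 ⁅x, y⁆ z * bracketCoeff e₁ e₂ n m k := by
  rw [Gbr_single_single, bracketCoeff]
  split_ifs
  · simp only [smul_single, gammaCocycle_add_left, gammaCocycle_single_single,
      LinearMap.map_smul₂, smul_eq_mul]
    ring
  · rw [gammaCocycle_single_single]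

noncomputable def gammaCyclicSum (a b c : ℤ →₀ 𝔤) : ℂ :=
  gammaCocycle 𝔤 e₁ e₂ (Gbr 𝔤 e₁ e₂ a b) c + gammaCocycle 𝔤 e₁ e₂ (Gbr 𝔤 e₁ e₂ b c) a
    + gammaCocycle 𝔤 e₁ e₂ (Gbr 𝔤 e₁ e₂ c a) b

lemma gammaCyclicSum_rotate (a b c : ℤ →₀ 𝔤) :
    gammaCyclicSum e₁ e₂ a b c = gammaCyclicSum e₁ e₂ b c a := by
  unfold gammaCyclicSum
  ring

lemma gammaCyclicSum_add_left (a a' b c : ℤ →₀ 𝔤) :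
    gammaCyclicSum e₁ e₂ (a + a') b c
      = gammaCyclicSum e₁ e₂ a b c + gammaCyclicSum e₁ e₂ a' b c := by
  simp only [gammaCyclicSum, Gbr_add_left, Gbr_add_right, gammaCocycle_add_left,
    gammaCocycle_add_right]
  ring

lemma gammaCyclicSum_single_single_single (n m k : ℤ) (x y z : 𝔤) :
    gammaCyclicSum e₁ e₂ (single n x) (single m y) (single k z) = 0 := by
  have hyz : killingForm ℂ 𝔤 ⁅y, z⁆ x = killingForm ℂ 𝔤 ⁅x, y⁆ z := by
    rw [LieModule.traceForm_comm, LieModule.traceForm_apply_lie_apply]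
  have hzx : killingForm ℂ 𝔤 ⁅z, x⁆ y = killingForm ℂ 𝔤 ⁅x, y⁆ z := by
    rw [LieModule.traceForm_apply_lie_apply, LieModule.traceForm_comm]
  rw [gammaCyclicSum, gammaCocycle_Gbr_single_single, gammaCocycle_Gbr_single_single,
    gammaCocycle_Gbr_single_single, hyz, hzx, ← mul_add, ← mul_add, bracketCoeff_cyclic, mul_zero]

lemma gammaCyclicSum_eq_zero_of_single_left {b c : ℤ →₀ 𝔤}
    (h : ∀ n x, gammaCyclicSum e₁ e₂ (single n x) b c = 0) (a : ℤ →₀ 𝔤) :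
    gammaCyclicSum e₁ e₂ a b c = 0 := by
  induction a using Finsupp.induction_linear with
  | zero => simpa using h 0 0
  | add a a' ha ha' => rw [gammaCyclicSum_add_left, ha, ha', add_zero]
  | single n x => exact h n x

lemma gammaCyclicSum_eq_zero (a b c : ℤ →₀ 𝔤) : gammaCyclicSum e₁ e₂ a b c = 0 := by
  refine gammaCyclicSum_eq_zero_of_single_left e₁ e₂ (fun n x => ?_) a
  rw [gammaCyclicSum_rotate]
  refine gammaCyclicSum_eq_zero_of_single_left e₁ e₂ (fun m y => ?_) b
  rw [gammaCyclicSum_rotate]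
  refine gammaCyclicSum_eq_zero_of_single_left e₁ e₂ (fun k z => ?_) c
  rw [gammaCyclicSum_rotate]
  exact gammaCyclicSum_single_single_single e₁ e₂ n m k x y z

end Cocycle

theorem gamma_is_alternating_two_cocycle_general (𝔤 : Type) [LieRing 𝔤] [LieAlgebra ℂ 𝔤] (e₁ e₂ : ℂ) :
    (∀ a : ℤ →₀ 𝔤, gammaCocycle 𝔤 e₁ e₂ a a = 0) ∧
    (∀ a b c' : ℤ →₀ 𝔤,
      gammaCocycle 𝔤 e₁ e₂ (Gbr 𝔤 e₁ e₂ a b) c'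
        + gammaCocycle 𝔤 e₁ e₂ (Gbr 𝔤 e₁ e₂ b c') a
        + gammaCocycle 𝔤 e₁ e₂ (Gbr 𝔤 e₁ e₂ c' a) b = 0) :=
  ⟨gammaCocycle_self e₁ e₂, gammaCyclicSum_eq_zero e₁ e₂⟩

/-- For `𝔤` a finite-dimensional simple complex Lie algebra
with Killing form `β` and `(e₁,e₂) ∈ ℂ²`, the bilinear form `γ` on
`Ḡ^(e₁,e₂)` determined by `γ(x ⊗ Aₙ, y ⊗ Aₘ) = β(x,y)·c(n,m)` is an
alternating Lie algebra 2-cocycle with values in the trivial module ℂ: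
`γ([a,b],c') + γ([b,c'],a) + γ([c',a],b) = 0` for all `a, b, c'`. -/
theorem gamma_is_alternating_two_cocycle (𝔤 : Type) [LieRing 𝔤] [LieAlgebra ℂ 𝔤]
    [FiniteDimensional ℂ 𝔤] [LieAlgebra.IsSimple ℂ 𝔤] (e₁ e₂ : ℂ) :
    (∀ a : ℤ →₀ 𝔤, gammaCocycle 𝔤 e₁ e₂ a a = 0) ∧
    (∀ a b c' : ℤ →₀ 𝔤,
      gammaCocycle 𝔤 e₁ e₂ (Gbr 𝔤 e₁ e₂ a b) c'
        + gammaCocycle 𝔤 e₁ e₂ (Gbr 𝔤 e₁ e₂ b c') a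
        + gammaCocycle 𝔤 e₁ e₂ (Gbr 𝔤 e₁ e₂ c' a) b = 0) :=
  gamma_is_alternating_two_cocycle_general 𝔤 e₁ e₂
end
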